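/- arXiv:1208.5531 — 4 statements merged into one kernel-verified Lean document; each statement's English description precedes it below -/
import Mathlib

section
/- For all natural numbers n and r and every integer m, the Gaussian binomial coefficient satisfies the q-Vandermonde-type identity [m+n choose r] = \sum_{t=0}^{\min(n,r)} v^{t(m+n)-nr} [m choose r-t] [n choose t], as an identity in the field of rational functions \mathbb{Q}(v). -/
open Finset

/-- The indeterminate `v` in `ℚ(v)`. -/
noncomputable def v : RatFunc ℚ := RatFunc.X

/-- The Gaussian binomial coefficient `[a choose b]` in `ℚ(v)`,
with the convention that it is `0` for `b < 0`. -/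
noncomputable def qbinom (a b : ℤ) : RatFunc ℚ :=
  if b < 0 then 0 else
    ∏ h ∈ Finset.range b.toNat,
      (v ^ (a - (h : ℤ)) - v ^ (-(a - (h : ℤ)))) /
        (v ^ ((h : ℤ) + 1) - v ^ (-((h : ℤ) + 1)))

lemma v_ne_zero : v ≠ 0 := RatFunc.X_ne_zero
noncomputable def qnum (a : ℤ) : RatFunc ℚ := v ^ a - v ^ (-a)
lemma qnum_succ_ne_zero (k : ℕ) : qnum ((k:ℤ)+1) ≠ 0 := by
  intro h
  have h1 : v ^ ((k:ℤ)+1) = v ^ (-((k:ℤ)+1)) := sub_eq_zero.mp h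
  have h2 : v ^ (2*(k:ℤ)+2) = 1 := by
    rw [show (2*(k:ℤ)+2) = ((k:ℤ)+1)+((k:ℤ)+1) from by ring, zpow_add₀ v_ne_zero]
    nth_rewrite 2 [h1]
    rw [← zpow_add₀ v_ne_zero, add_neg_cancel, zpow_zero]
  have h3 : (RatFunc.X : RatFunc ℚ) ^ (2*k+2) = 1 := by
    have e : ((2*k+2 : ℕ) : ℤ) = 2*(k:ℤ)+2 := by push_cast; ring
    rw [← zpow_natCast, e]; exact h2
  have h4 : (Polynomial.X : Polynomial ℚ) ^ (2*k+2) = 1 := by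
    apply RatFunc.algebraMap_injective ℚ
    rw [map_pow, map_one, RatFunc.algebraMap_X]
    exact h3
  have := congrArg Polynomial.natDegree h4
  simp [Polynomial.natDegree_X_pow] at this

noncomputable def Q (a : ℤ) (b : ℕ) : RatFunc ℚ :=
  ∏ h ∈ Finset.range b, qnum (a - h) / qnum ((h:ℤ) + 1)

lemma qbinom_coe (a : ℤ) (b : ℕ) : qbinom a b = Q a b := by
  unfold qbinom Q qnum
  rw [if_neg (by omega : ¬ ((b:ℤ) < 0))]
  simp

lemma qbinom_neg (a b : ℤ) (h : b < 0) : qbinom a b = 0 := by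
  unfold qbinom; rw [if_pos h]

lemma qbinom_zero (a : ℤ) : qbinom a 0 = 1 := by
  unfold qbinom; simp

lemma Q_zero (a : ℤ) : Q a 0 = 1 := by unfold Q; simp

lemma Q_succ (a : ℤ) (b : ℕ) : Q a (b+1) = Q a b * (qnum (a - b) / qnum ((b:ℤ)+1)) :=
  Finset.prod_range_succ _ b

lemma Q_alt (a : ℤ) (b : ℕ) : Q a (b+1) = (qnum a / qnum ((b:ℤ)+1)) * Q (a-1) b := by
  induction b generalizing a with
  | zero => rw [Q_succ, Q_zero, Q_zero]; simp
  | succ b ih =>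
    rw [Q_succ, ih a, Q_succ (a-1) b]
    have h1 := qnum_succ_ne_zero b
    have h2 : qnum ((b:ℤ)+1+1) ≠ 0 := by
      have := qnum_succ_ne_zero (b+1); push_cast at this; exact this
    have e : a - ((b:ℕ)+1:ℕ) = a - 1 - b := by push_cast; ring
    push_cast
    rw [show a - ((b:ℤ)+1) = a - 1 - b from by ring]
    field_simp

lemma qnum_id (a b : ℤ) : qnum a = v^(-b) * qnum (a - b) + v^(a-b) * qnum b := by
  unfold qnum
  rw [mul_sub, mul_sub, ← zpow_add₀ v_ne_zero, ← zpow_add₀ v_ne_zero,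
    ← zpow_add₀ v_ne_zero, ← zpow_add₀ v_ne_zero,
    show -b + (a-b) = a - 2*b from by ring,
    show -b + -(a-b) = -a from by ring,
    show a - b + b = a from by ring,
    show a - b + -b = a - 2*b from by ring]
  ring

lemma Q_pascal (a : ℤ) (b : ℕ) :
    Q a (b+1) = v^(-((b:ℤ)+1)) * Q (a-1) (b+1) + v^(a - ((b:ℤ)+1)) * Q (a-1) b := by
  rw [Q_alt, Q_succ (a-1) b, qnum_id a ((b:ℤ)+1),
    show a - ((b:ℤ)+1) = a - 1 - b from by ring]
  have h1 := qnum_succ_ne_zero b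
  field_simp

lemma qbinom_pascal (a : ℤ) (b : ℕ) :
    qbinom a b = v^(-(b:ℤ)) * qbinom (a-1) b + v^(a-(b:ℤ)) * qbinom (a-1) ((b:ℤ)-1) := by
  cases b with
  | zero =>
    norm_num
    rw [qbinom_zero, qbinom_zero, qbinom_neg (a-1) _ (by norm_num)]
    simp
  | succ b =>
    rw [qbinom_coe, qbinom_coe,
      show ((b+1:ℕ):ℤ) - 1 = ((b:ℕ):ℤ) from by push_cast; ring, qbinom_coe]
    have := Q_pascal a b
    push_cast
    convert this using 3

lemma qbinom_nat_big (n b : ℕ) (h : n < b) : qbinom (n:ℤ) (b:ℤ) = 0 := by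
  rw [qbinom_coe]
  unfold Q
  apply Finset.prod_eq_zero (Finset.mem_range.mpr h)
  rw [sub_self]
  unfold qnum
  simp

lemma pascal_succ (a : ℤ) (b : ℕ) :
    qbinom a ((b:ℤ)+1) = v^(-((b:ℤ)+1)) * qbinom (a-1) ((b:ℤ)+1)
      + v^(a-((b:ℤ)+1)) * qbinom (a-1) (b:ℤ) := by
  have h := qbinom_pascal a (b+1)
  push_cast at h
  rw [add_sub_cancel_right] at h
  exact h

lemma pascal_t (n t : ℕ) :
    qbinom ((n:ℤ)+1) (t:ℤ) = v^(-(t:ℤ)) * qbinom (n:ℤ) (t:ℤ)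
      + v^((n:ℤ)+1-(t:ℤ)) * qbinom (n:ℤ) ((t:ℤ)-1) := by
  have h := qbinom_pascal ((n:ℤ)+1) t
  rw [add_sub_cancel_right] at h
  exact h

lemma key2 (x y z w : ℤ) (p q : RatFunc ℚ) (h : x + y = z + w) :
    v^x * (v^y * p * q) = v^z * p * (v^w * q) := by
  have h1 : v^x * (v^y * p * q) = v^(x+y) * p * q := by
    rw [zpow_add₀ v_ne_zero]; ring
  have h2 : v^z * p * (v^w * q) = v^(z+w) * p * q := by
    rw [zpow_add₀ v_ne_zero]; ring
  rw [h1, h2, h]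


theorem qbinom_vandermonde (n r : ℕ) (m : ℤ) :
    qbinom (m + n) r =
      ∑ t ∈ Finset.range (min n r + 1),
        v ^ ((t : ℤ) * (m + n) - (n : ℤ) * r) * qbinom m ((r : ℤ) - t) * qbinom n t := by
  induction n generalizing r with
  | zero => simp [qbinom_zero]
  | succ n ih =>
    cases r with
    | zero => simp [qbinom_zero]
    | succ r =>
      rw [show min (n+1) (r+1) = min n r + 1 from by omega]
      push_cast
      have ih1 := ih (r+1); push_cast at ih1
      have ih2 := ih r; push_cast at ih2
      have hL := pascal_succ (m + ((n:ℤ)+1)) r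
      rw [show m + ((n:ℤ)+1) - 1 = m + (n:ℤ) from by ring] at hL
      rw [hL, ih1, ih2, Finset.mul_sum, Finset.mul_sum]
      simp only [pascal_t, mul_add, Finset.sum_add_distrib]
      congr 1
      · rcases le_or_gt (r+1) n with h | h
        · rw [show n ⊓ (r+1) = r+1 from by omega, show n ⊓ r + 1 + 1 = r + 1 + 1 from by omega]
          exact Finset.sum_congr rfl fun t ht => key2 _ _ _ _ _ _ (by push_cast; ring)
        · rw [show n ⊓ (r+1) = n from by omega, show n ⊓ r + 1 + 1 = n + 1 + 1 from by omega,
            Finset.sum_range_succ _ (n+1), qbinom_nat_big n (n+1) (by omega)]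
          rw [mul_zero, mul_zero, add_zero]
          exact Finset.sum_congr rfl fun t ht => key2 _ _ _ _ _ _ (by push_cast; ring)
      · rw [Finset.sum_range_succ' _ (n ⊓ r + 1)]
        have hz : qbinom (n:ℤ) (((0:ℕ):ℤ) - 1) = 0 := qbinom_neg _ _ (by norm_num)
        rw [hz, mul_zero, mul_zero, add_zero]
        refine Finset.sum_congr rfl fun t ht => ?_
        push_cast
        rw [show (r:ℤ)+1-((t:ℤ)+1) = (r:ℤ)-(t:ℤ) from by ring, add_sub_cancel_right]
        exact key2 _ _ _ _ _ _ (by ring)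
end

section
/- Let m, k, \delta be natural numbers with m \geq k. Then \sum_{i=0}^{\delta} (-1)^i [k+i-1 choose i] [m choose \delta - i] v^{i(m-k)} = [m-k choose \delta] v^{-k\delta} in \mathbb{Q}(v). -/
open Finset

lemma vadd (s t : ℤ) : v ^ s * v ^ t = v ^ (s + t) := (zpow_add₀ v_ne_zero s t).symm

lemma v_npow_ne_one {n : ℕ} (hn : n ≠ 0) : v ^ n ≠ 1 := by
  intro h
  have h2 : (algebraMap (Polynomial ℚ) (RatFunc ℚ)) (Polynomial.X ^ n) =
      (algebraMap (Polynomial ℚ) (RatFunc ℚ)) 1 := by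
    rw [map_pow, map_one, RatFunc.algebraMap_X]; exact h
  have h3 := RatFunc.algebraMap_injective ℚ h2
  have h4 := congrArg Polynomial.natDegree h3
  simp [Polynomial.natDegree_X_pow] at h4
  exact hn h4

lemma v_zpow_eq_one {n : ℤ} (h : v ^ n = 1) : n = 0 := by
  rcases n.eq_nat_or_neg with ⟨m, rfl | rfl⟩
  · rw [zpow_natCast] at h
    by_contra hm
    exact v_npow_ne_one (by exact_mod_cast hm) h
  · rw [zpow_neg, inv_eq_one, zpow_natCast] at h
    by_contra hm
    exact v_npow_ne_one (by simpa using hm) h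

noncomputable def Nv (s : ℤ) : RatFunc ℚ := v ^ s - v ^ (-s)

lemma Nv_zero : Nv 0 = 0 := by simp [Nv]

lemma Nv_neg (s : ℤ) : Nv (-s) = - Nv s := by simp [Nv]

lemma Nv_ne_zero (s : ℤ) (hs : s ≠ 0) : Nv s ≠ 0 := by
  intro h
  have h1 : v ^ s = v ^ (-s) := sub_eq_zero.mp h
  have h2 : v ^ (s + s) = 1 := by
    rw [← vadd s s]
    nth_rewrite 1 [h1]
    rw [vadd]; simp
  have := v_zpow_eq_one h2
  omega

lemma qbinom_natCast (a : ℤ) (b : ℕ) :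
    qbinom a b = ∏ h ∈ range b, Nv (a - h) / Nv ((h : ℤ) + 1) := by
  rw [qbinom, if_neg (by omega)]
  simp [Nv]

lemma qbinom_of_neg (a : ℤ) {b : ℤ} (h : b < 0) : qbinom a b = 0 := by
  rw [qbinom, if_pos h]

lemma qbinom_of_lt (a : ℤ) (b : ℕ) (h0 : 0 ≤ a) (hab : a < b) : qbinom a b = 0 := by
  rw [qbinom_natCast]
  apply Finset.prod_eq_zero (i := a.toNat) (mem_range.mpr (by omega))
  rw [show a - (a.toNat : ℤ) = 0 by omega, Nv_zero, zero_div]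

lemma qbinom_neg_one (b : ℕ) : qbinom (-1) b = (-1) ^ b := by
  rw [qbinom_natCast]
  have hterm : ∀ h ∈ range b, Nv (-1 - (h : ℤ)) / Nv ((h : ℤ) + 1) = (-1 : RatFunc ℚ) := by
    intro h _
    rw [show (-1 : ℤ) - (h : ℤ) = -((h : ℤ) + 1) by ring, Nv_neg, neg_div,
      div_self (Nv_ne_zero _ (by omega))]
  rw [Finset.prod_congr rfl hterm, Finset.prod_const, Finset.card_range]

lemma qbinom_one_one : qbinom 1 1 = 1 := by
  have := qbinom_natCast 1 1
  simp only [range_one, prod_singleton, Nat.cast_zero, Nat.cast_one, sub_zero] at this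
  rw [this, show (0:ℤ) + 1 = 1 by ring, div_self (Nv_ne_zero 1 one_ne_zero)]

lemma qbinom_eq_div (a : ℤ) (b : ℕ) :
    qbinom a b = (∏ h ∈ range b, Nv (a - h)) / (∏ h ∈ range b, Nv ((h : ℤ) + 1)) := by
  rw [qbinom_natCast, Finset.prod_div_distrib]

lemma den_ne_zero (b : ℕ) : (∏ h ∈ range b, Nv ((h : ℤ) + 1)) ≠ 0 :=
  Finset.prod_ne_zero_iff.mpr fun h _ => Nv_ne_zero _ (by omega)

lemma num_succ (a : ℤ) (b : ℕ) :
    ∏ h ∈ range (b + 1), Nv (a - h) = (∏ h ∈ range b, Nv (a - h)) * Nv (a - b) :=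
  Finset.prod_range_succ _ _

lemma num_succ' (a : ℤ) (b : ℕ) :
    ∏ h ∈ range (b + 1), Nv (a - h) = (∏ h ∈ range b, Nv (a - 1 - h)) * Nv a := by
  rw [Finset.prod_range_succ']
  congr 1
  · apply Finset.prod_congr rfl
    intro h _
    congr 1
    push_cast
    ring
  · simp

lemma shift1 (a : ℤ) (b : ℕ) :
    qbinom (a - 1) b * Nv a = qbinom a b * Nv (a - b) := by
  rw [qbinom_eq_div, qbinom_eq_div, div_mul_eq_mul_div, div_mul_eq_mul_div,
    ← num_succ', ← num_succ]

lemma shift2 (a : ℤ) (b : ℕ) :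
    qbinom a (b + 1 : ℕ) * Nv ((b : ℤ) + 1) = qbinom (a - 1) b * Nv a := by
  rw [qbinom_eq_div, qbinom_eq_div, num_succ', Finset.prod_range_succ]
  have h1 : Nv ((b : ℤ) + 1) ≠ 0 := Nv_ne_zero _ (by omega)
  have h2 := den_ne_zero b
  field_simp

lemma Nv_key1 (a c : ℤ) : v ^ c * Nv (a - c) + v ^ (c - a) * Nv c = Nv a := by
  simp only [Nv, mul_sub, vadd]
  rw [show c + (a - c) = a by ring, show c + -(a - c) = 2 * c - a by ring,
    show c - a + c = 2 * c - a by ring, show c - a + -c = -a by ring]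
  ring

lemma Nv_key2 (a c : ℤ) : v ^ (-c) * Nv (a - c) + v ^ (a - c) * Nv c = Nv a := by
  simp only [Nv, mul_sub, vadd]
  rw [show -c + (a - c) = a - 2 * c by ring, show -c + -(a - c) = -a by ring,
    show a - c + c = a by ring, show a - c + -c = a - 2 * c by ring]
  ring

lemma pascal1_nat (a : ℤ) (b : ℕ) :
    qbinom a ((b : ℤ) + 1) =
      v ^ ((b : ℤ) + 1) * qbinom (a - 1) ((b : ℤ) + 1) +
        v ^ ((b : ℤ) + 1 - a) * qbinom (a - 1) b := by
  by_cases ha : a = 0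
  · subst ha
    rw [show (0 : ℤ) - 1 = ((-1 : ℤ)) by ring,
      show ((b : ℤ) + 1) = ((b + 1 : ℕ) : ℤ) by push_cast; ring,
      qbinom_neg_one (b + 1), qbinom_neg_one b,
      qbinom_of_lt 0 (b + 1) le_rfl (by omega)]
    rw [pow_succ]
    ring
  · have hNa : Nv a ≠ 0 := Nv_ne_zero a ha
    apply mul_right_cancel₀ hNa
    have h1 := shift1 a (b + 1)
    have h2 := shift2 a b
    have h3 := Nv_key1 a ((b : ℤ) + 1)
    push_cast at h1 h2 h3 ⊢
    linear_combination (-(v ^ ((b : ℤ) + 1))) * h1 + v ^ ((b : ℤ) + 1 - a) * h2 +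
      (-(qbinom a ((b : ℤ) + 1))) * h3

lemma pascal2_nat (a : ℤ) (b : ℕ) :
    qbinom a ((b : ℤ) + 1) =
      v ^ (-((b : ℤ) + 1)) * qbinom (a - 1) ((b : ℤ) + 1) +
        v ^ (a - ((b : ℤ) + 1)) * qbinom (a - 1) b := by
  by_cases ha : a = 0
  · subst ha
    rw [show (0 : ℤ) - 1 = ((-1 : ℤ)) by ring,
      show ((b : ℤ) + 1) = ((b + 1 : ℕ) : ℤ) by push_cast; ring,
      qbinom_neg_one (b + 1), qbinom_neg_one b,
      qbinom_of_lt 0 (b + 1) le_rfl (by omega)]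
    rw [pow_succ]
    ring
  · have hNa : Nv a ≠ 0 := Nv_ne_zero a ha
    apply mul_right_cancel₀ hNa
    have h1 := shift1 a (b + 1)
    have h2 := shift2 a b
    have h3 := Nv_key2 a ((b : ℤ) + 1)
    push_cast at h1 h2 h3 ⊢
    linear_combination (-(v ^ (-((b : ℤ) + 1)))) * h1 + v ^ (a - ((b : ℤ) + 1)) * h2 +
      (-(qbinom a ((b : ℤ) + 1))) * h3

lemma pascal1 (a c : ℤ) (hc : 0 ≤ c) :
    qbinom a c = v ^ c * qbinom (a - 1) c + v ^ (c - a) * qbinom (a - 1) (c - 1) := by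
  obtain ⟨b, rfl⟩ := Int.eq_ofNat_of_zero_le hc
  cases b with
  | zero =>
      rw [show ((0:ℕ):ℤ) = 0 from rfl, qbinom_of_neg _ (show (0:ℤ) - 1 < 0 by norm_num),
        qbinom_zero, qbinom_zero]
      simp
  | succ n =>
      have h := pascal1_nat a n
      rw [show ((n + 1 : ℕ) : ℤ) = (n : ℤ) + 1 by push_cast; ring,
        show (n : ℤ) + 1 - 1 = (n : ℤ) by ring]
      exact h

lemma pascal2 (a c : ℤ) (hc : 0 ≤ c) :
    qbinom a c = v ^ (-c) * qbinom (a - 1) c + v ^ (a - c) * qbinom (a - 1) (c - 1) := by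
  obtain ⟨b, rfl⟩ := Int.eq_ofNat_of_zero_le hc
  cases b with
  | zero =>
      rw [show ((0:ℕ):ℤ) = 0 from rfl, qbinom_of_neg _ (show (0:ℤ) - 1 < 0 by norm_num),
        qbinom_zero, qbinom_zero]
      simp
  | succ n =>
      have h := pascal2_nat a n
      rw [show ((n + 1 : ℕ) : ℤ) = (n : ℤ) + 1 by push_cast; ring,
        show (n : ℤ) + 1 - 1 = (n : ℤ) by ring]
      exact h

noncomputable def S (m k : ℤ) (δ : ℕ) : RatFunc ℚ :=
  ∑ i ∈ Finset.range (δ + 1),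
    (-1 : RatFunc ℚ) ^ i * qbinom (k + i - 1) i * qbinom m ((δ : ℤ) - i) *
      v ^ ((i : ℤ) * (m - k))

lemma S_def (m k : ℤ) (δ : ℕ) : S m k δ = ∑ i ∈ Finset.range (δ + 1),
    (-1 : RatFunc ℚ) ^ i * qbinom (k + i - 1) i * qbinom m ((δ : ℤ) - i) *
      v ^ ((i : ℤ) * (m - k)) := rfl

lemma key (m : ℕ) : ∀ k : ℕ, k ≤ m → ∀ δ : ℕ,
    S m k δ = qbinom ((m : ℤ) - k) δ * v ^ (-((k : ℤ) * δ)) := by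
  induction m with
  | zero =>
    intro k hk δ
    interval_cases k
    rw [S_def, Finset.sum_eq_single_of_mem 0 (Finset.mem_range.mpr (by omega))]
    · simp [qbinom_zero]
    · intro i _ hi
      rw [show ((0 : ℕ) : ℤ) + (i : ℤ) - 1 = (i : ℤ) - 1 by push_cast; ring,
        qbinom_of_lt ((i : ℤ) - 1) i (by omega) (by omega)]
      ring
  | succ m IH =>
    have stepA : ∀ k : ℕ, k ≤ m → ∀ δ : ℕ,
        S ((m:ℤ)+1) k δ = qbinom ((m:ℤ) + 1 - k) δ * v ^ (-((k:ℤ) * δ)) := by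
      intro k hk δ
      cases δ with
      | zero => simp [S_def, qbinom_zero]
      | succ δ =>
        have hsplit : S ((m:ℤ)+1) k (δ+1) =
            (∑ i ∈ range (δ+1+1), v ^ ((δ:ℤ)+1) *
              ((-1:RatFunc ℚ)^i * qbinom ((k:ℤ) + i - 1) i * qbinom (m:ℤ) (((δ+1:ℕ):ℤ) - i) *
                v ^ ((i:ℤ) * ((m:ℤ) - k)))) +
            (∑ i ∈ range (δ+1+1), v ^ ((δ:ℤ) - m) *
              ((-1:RatFunc ℚ)^i * qbinom ((k:ℤ) + i - 1) i * qbinom (m:ℤ) ((δ:ℤ) - i) *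
                v ^ ((i:ℤ) * ((m:ℤ) - k)))) := by
          rw [S_def, ← Finset.sum_add_distrib]
          apply Finset.sum_congr rfl
          intro i hi
          have hi' : i < δ + 2 := Finset.mem_range.mp hi
          have hp := pascal1 ((m:ℤ)+1) (((δ+1:ℕ):ℤ) - i) (by push_cast; omega)
          rw [show (m:ℤ)+1-1 = (m:ℤ) by ring,
            show ((δ+1:ℕ):ℤ) - i - 1 = (δ:ℤ) - i by push_cast; ring] at hp
          rw [hp]
          have e1 : v ^ (((δ+1:ℕ):ℤ) - i) * v ^ ((i:ℤ) * ((m:ℤ)+1 - k))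
              = v ^ ((δ:ℤ)+1) * v ^ ((i:ℤ) * ((m:ℤ) - k)) := by
            rw [vadd, vadd]; congr 1; push_cast; ring
          have e2 : v ^ (((δ+1:ℕ):ℤ) - i - ((m:ℤ)+1)) * v ^ ((i:ℤ) * ((m:ℤ)+1 - k))
              = v ^ ((δ:ℤ) - m) * v ^ ((i:ℤ) * ((m:ℤ) - k)) := by
            rw [vadd, vadd]; congr 1; push_cast; ring
          linear_combination ((-1:RatFunc ℚ)^i * qbinom ((k:ℤ) + i - 1) i *
              qbinom (m:ℤ) (((δ+1:ℕ):ℤ) - i)) * e1 +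
            ((-1:RatFunc ℚ)^i * qbinom ((k:ℤ) + i - 1) i * qbinom (m:ℤ) ((δ:ℤ) - i)) * e2
        rw [hsplit, ← Finset.mul_sum, ← Finset.mul_sum]
        have hA : (∑ i ∈ range (δ+1+1),
            ((-1:RatFunc ℚ)^i * qbinom ((k:ℤ) + i - 1) i * qbinom (m:ℤ) (((δ+1:ℕ):ℤ) - i) *
              v ^ ((i:ℤ) * ((m:ℤ) - k)))) = S m k (δ+1) := (S_def _ _ _).symm
        have hB : (∑ i ∈ range (δ+1+1),
            ((-1:RatFunc ℚ)^i * qbinom ((k:ℤ) + i - 1) i * qbinom (m:ℤ) ((δ:ℤ) - i) *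
              v ^ ((i:ℤ) * ((m:ℤ) - k)))) = S m k δ := by
          rw [Finset.sum_range_succ,
            qbinom_of_neg (m:ℤ) (show (δ:ℤ) - ((δ+1:ℕ):ℤ) < 0 by push_cast; omega),
            S_def]
          simp
        rw [hA, hB, IH k hk (δ+1), IH k hk δ]
        have hp2 := pascal1 ((m:ℤ)+1-k) (((δ+1:ℕ):ℤ)) (by push_cast; omega)
        rw [show (m:ℤ)+1-(k:ℤ)-1 = (m:ℤ)-k by ring,
          show ((δ+1:ℕ):ℤ) - 1 = (δ:ℤ) by push_cast; ring] at hp2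
        rw [hp2]
        have E1 : v ^ ((δ:ℤ)+1) = v ^ (((δ+1:ℕ):ℤ)) := by norm_cast
        have E2 : v ^ ((δ:ℤ) - m) * v ^ (-((k:ℤ) * δ))
            = v ^ (((δ+1:ℕ):ℤ) - ((m:ℤ)+1-k)) * v ^ (-((k:ℤ) * ((δ+1:ℕ):ℤ))) := by
          rw [vadd, vadd]; congr 1; push_cast; ring
        linear_combination (qbinom ((m:ℤ)-k) (((δ+1:ℕ):ℤ)) * v ^ (-((k:ℤ) * ((δ+1:ℕ):ℤ)))) * E1 +
          (qbinom ((m:ℤ)-k) ((δ:ℕ):ℤ)) * E2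
    have stepB : ∀ δ : ℕ,
        S ((m:ℤ)+1) ((m:ℤ)+1) δ = qbinom 0 δ * v ^ (-(((m:ℤ)+1) * δ)) := by
      intro δ
      induction δ with
      | zero => simp [S_def, qbinom_zero]
      | succ δ IHδ =>
        have hsplit : S ((m:ℤ)+1) ((m:ℤ)+1) (δ+1) =
            (∑ i ∈ range (δ+1+1),
              ((-1:RatFunc ℚ)^i * qbinom ((m:ℤ) + i - 1) i *
                qbinom ((m:ℤ)+1) (((δ+1:ℕ):ℤ) - i) * v ^ ((i:ℤ) * (((m:ℤ)+1) - (m:ℤ))))) +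
            (∑ i ∈ range (δ+1+1), v ^ (-(m:ℤ)) *
              ((-1:RatFunc ℚ)^i * qbinom ((m:ℤ) + i - 1) ((i:ℤ) - 1) *
                qbinom ((m:ℤ)+1) (((δ+1:ℕ):ℤ) - i))) := by
          rw [S_def, ← Finset.sum_add_distrib]
          apply Finset.sum_congr rfl
          intro i _
          have hp := pascal1 ((m:ℤ)+1+(i:ℤ)-1) (i:ℤ) (by omega)
          rw [show (m:ℤ)+1+(i:ℤ)-1-1 = (m:ℤ)+(i:ℤ)-1 by ring,
            show (i:ℤ) - ((m:ℤ)+1+(i:ℤ)-1) = -(m:ℤ) by ring] at hp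
          rw [hp]
          have e1 : v ^ ((i:ℤ)) * v ^ ((i:ℤ) * (((m:ℤ)+1) - ((m:ℤ)+1)))
              = v ^ ((i:ℤ) * (((m:ℤ)+1) - (m:ℤ))) := by
            rw [vadd]; congr 1; ring
          have e2 : v ^ ((i:ℤ) * (((m:ℤ)+1) - ((m:ℤ)+1))) = 1 := by
            rw [show (i:ℤ) * (((m:ℤ)+1) - ((m:ℤ)+1)) = 0 by ring, zpow_zero]
          linear_combination ((-1:RatFunc ℚ)^i * qbinom ((m:ℤ) + i - 1) i *
              qbinom ((m:ℤ)+1) (((δ+1:ℕ):ℤ) - i)) * e1 +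
            ((-1:RatFunc ℚ)^i * qbinom ((m:ℤ) + i - 1) ((i:ℤ) - 1) *
              qbinom ((m:ℤ)+1) (((δ+1:ℕ):ℤ) - i) * v ^ (-(m:ℤ))) * e2
        have hA : (∑ i ∈ range (δ+1+1),
            ((-1:RatFunc ℚ)^i * qbinom ((m:ℤ) + i - 1) i *
              qbinom ((m:ℤ)+1) (((δ+1:ℕ):ℤ) - i) * v ^ ((i:ℤ) * (((m:ℤ)+1) - (m:ℤ)))))
            = S ((m:ℤ)+1) ((m:ℕ):ℤ) (δ+1) := (S_def _ _ _).symm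
        have hB : (∑ i ∈ range (δ+1+1),
            ((-1:RatFunc ℚ)^i * qbinom ((m:ℤ) + i - 1) ((i:ℤ) - 1) *
              qbinom ((m:ℤ)+1) (((δ+1:ℕ):ℤ) - i)))
            = - S ((m:ℤ)+1) ((m:ℤ)+1) δ := by
          rw [Finset.sum_range_succ']
          have h0 : (-1:RatFunc ℚ)^(0:ℕ) * qbinom ((m:ℤ) + ((0:ℕ):ℤ) - 1) (((0:ℕ):ℤ) - 1) *
              qbinom ((m:ℤ)+1) (((δ+1:ℕ):ℤ) - ((0:ℕ):ℤ)) = 0 := by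
            rw [qbinom_of_neg _ (show (((0:ℕ)):ℤ) - 1 < 0 by norm_num)]
            ring
          rw [h0, add_zero, S_def, ← Finset.sum_neg_distrib]
          apply Finset.sum_congr rfl
          intro j _
          rw [show (m:ℤ) + ((j+1:ℕ):ℤ) - 1 = (m:ℤ)+1+(j:ℤ)-1 by push_cast; ring,
            show ((j+1:ℕ):ℤ) - 1 = (j:ℤ) by push_cast; ring,
            show ((δ+1:ℕ):ℤ) - ((j+1:ℕ):ℤ) = (δ:ℤ) - (j:ℤ) by push_cast; ring,
            pow_succ,
            show v ^ ((j:ℤ) * (((m:ℤ)+1) - ((m:ℤ)+1))) = 1 by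
              rw [show (j:ℤ) * (((m:ℤ)+1) - ((m:ℤ)+1)) = 0 by ring, zpow_zero]]
          ring
        rw [hsplit, hA, ← Finset.mul_sum, hB, stepA m le_rfl (δ+1), IHδ,
          show (m:ℤ)+1-((m:ℕ):ℤ) = 1 by ring]
        have hz1 : qbinom 0 (((δ+1:ℕ)):ℤ) = 0 := qbinom_of_lt 0 (δ+1) le_rfl (by omega)
        rw [hz1]
        cases δ with
        | zero =>
          have hq1 : qbinom 1 ((0+1:ℕ):ℤ) = 1 := by
            rw [show ((0+1:ℕ):ℤ) = 1 by norm_cast]; exact qbinom_one_one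
          have hq2 : qbinom 0 ((0:ℕ):ℤ) = 1 := by
            rw [show ((0:ℕ):ℤ) = 0 by norm_cast]; exact qbinom_zero 0
          rw [hq1, hq2]
          have e3 : v ^ (-(m:ℤ)) * v ^ (-(((m:ℤ)+1) * ((0:ℕ):ℤ)))
              = v ^ (-((m:ℤ) * ((0+1:ℕ):ℤ))) := by
            rw [vadd]; congr 1; push_cast; ring
          linear_combination - e3
        | succ n =>
          rw [qbinom_of_lt 1 (n+1+1) (by norm_num) (by push_cast; omega),
            qbinom_of_lt 0 (n+1) le_rfl (by push_cast; omega)]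
          ring
    intro k hk δ
    push_cast
    rcases eq_or_lt_of_le hk with rfl | hlt
    · push_cast
      rw [show ((m:ℤ)+1) - ((m:ℤ)+1) = 0 by ring]
      exact stepB δ
    · have hk' : k ≤ m := by omega
      exact stepA k hk' δ

theorem qbinom_alternating_sum (m k δ : ℕ) (hmk : k ≤ m) :
    ∑ i ∈ Finset.range (δ + 1),
        (-1 : RatFunc ℚ) ^ i * qbinom ((k : ℤ) + i - 1) i * qbinom m ((δ : ℤ) - i) *
          v ^ ((i : ℤ) * ((m : ℤ) - k)) =
      qbinom ((m : ℤ) - k) δ * v ^ (-((k : ℤ) * δ)) := by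
  exact key m k hmk δ
end

section
/- Let a, c, u, r be natural numbers with a \geq c, and let b be an integer. Then \sum_{f=0}^{u} (-1)^f [a-c+f-1 choose f] [b+r-f choose r] [a+u choose u-f] v^{f(u+c-r)} = \sum_{\delta=0}^{\min(u,r)} v^{\delta b + (u-\delta)(c-a-r)} [b+r-u choose r-\delta] [c+u-\delta choose u-\delta] [a+u choose \delta] in \mathbb{Q}(v). -/
open Finset

lemma v_ne : (v : RatFunc ℚ) ≠ 0 := by
  simpa [v] using RatFunc.X_ne_zero (K := ℚ)

noncomputable def qG (n : ℤ) : RatFunc ℚ := v ^ n - v ^ (-n)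

lemma qG_neg (n : ℤ) : qG (-n) = - qG n := by simp [qG]

lemma qG_zero : qG 0 = 0 := by simp [qG]

lemma qG_ne_zero {n : ℤ} (h : n ≠ 0) : qG n ≠ 0 := by
  have key : ∀ m : ℕ, 0 < m → qG m ≠ 0 := by
    intro m hm hzero
    have h1 : (v : RatFunc ℚ) ^ (m:ℤ) = v ^ (-(m:ℤ)) := by
      have := sub_eq_zero.mp hzero
      exact this
    have h2 : (v : RatFunc ℚ) ^ (2*m) = 1 := by
      have := congrArg (· * v ^ (m:ℤ)) h1
      simp only [← zpow_add₀ v_ne] at this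
      simpa [two_mul, ← zpow_natCast, zpow_add₀ v_ne] using this
    have h3 : (RatFunc.X : RatFunc ℚ) ^ (2*m) = 1 := by simpa [v] using h2
    have h4 : (Polynomial.X : Polynomial ℚ) ^ (2*m) = 1 := by
      apply RatFunc.algebraMap_injective (K := ℚ)
      simpa [map_pow, RatFunc.algebraMap_X] using h3
    have := congrArg Polynomial.natDegree h4
    simp [Polynomial.natDegree_X_pow] at this
    omega
  rcases h.lt_or_gt with hlt | hlt
  · intro hz
    have : qG (-n) ≠ 0 := by
      have : 0 < (-n).toNat := by omega
      have := key (-n).toNat this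
      rwa [Int.toNat_of_nonneg (by omega)] at this
    rw [qG_neg, hz] at this; simp at this
  · have : 0 < n.toNat := by omega
    have := key n.toNat this
    rwa [Int.toNat_of_nonneg (by omega)] at this

lemma qG_add (x y : ℤ) : qG (x + y) = v ^ x * qG y + v ^ (-y) * qG x := by
  simp only [qG, neg_add, zpow_add₀ v_ne]; ring

lemma qG_add' (x y : ℤ) : qG (x + y) = v ^ (-x) * qG y + v ^ y * qG x := by
  simp only [qG, neg_add, zpow_add₀ v_ne]; ring

noncomputable def qN (M : ℤ) (k : ℕ) : RatFunc ℚ := ∏ h ∈ range k, qG (M - h)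

noncomputable def qD (k : ℕ) : RatFunc ℚ := ∏ h ∈ range k, qG ((h:ℤ) + 1)

lemma qD_ne_zero (k : ℕ) : qD k ≠ 0 := by
  refine Finset.prod_ne_zero_iff.2 fun h _ => qG_ne_zero (by omega)

noncomputable def qQ (M : ℤ) (k : ℕ) : RatFunc ℚ := qN M k / qD k

lemma qbinom_eq (M : ℤ) (k : ℕ) : qbinom M k = qQ M k := by
  rw [qbinom, if_neg (by omega), qQ, qN, qD, Int.toNat_natCast, ← Finset.prod_div_distrib]
  rfl

lemma qbinom_neg_s3 (M : ℤ) {k : ℤ} (hk : k < 0) : qbinom M k = 0 := by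
  rw [qbinom, if_pos hk]

lemma qQ_zero (M : ℤ) : qQ M 0 = 1 := by simp [qQ, qN, qD]

lemma qQ_nat_eq_zero {t k : ℕ} (h : t < k) : qQ (t:ℤ) k = 0 := by
  have : qN (t:ℤ) k = 0 := by
    apply Finset.prod_eq_zero (Finset.mem_range.2 h)
    simp [qG_zero]
  simp [qQ, this]
lemma qN_succ_first (M : ℤ) (k : ℕ) : qN M (k+1) = qN (M-1) k * qG M := by
  rw [qN, Finset.prod_range_succ']
  congr 1
  · rw [qN]; apply Finset.prod_congr rfl; intro h _; congr 1; push_cast; ring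
  · simp

lemma qN_succ_last (M : ℤ) (k : ℕ) : qN M (k+1) = qN M k * qG (M - k) := by
  rw [qN, Finset.prod_range_succ]; rfl

lemma qD_succ (k : ℕ) : qD (k+1) = qD k * qG ((k:ℤ)+1) := by
  rw [qD, Finset.prod_range_succ]; rfl

lemma pascalA (M : ℤ) (k : ℕ) :
    qQ M (k+1) = v ^ (-((k:ℤ)+1)) * qQ (M-1) (k+1) + v ^ (M-(k+1)) * qQ (M-1) k := by
  have hg : qG M = v ^ (M - ((k:ℤ)+1)) * qG ((k:ℤ)+1) + v ^ (-((k:ℤ)+1)) * qG (M - ((k:ℤ)+1)) := by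
    have := qG_add (M - ((k:ℤ)+1)) ((k:ℤ)+1)
    rw [sub_add_cancel] at this
    exact this
  rw [qQ, qQ, qQ, qN_succ_first, qN_succ_last, qD_succ]
  have h1 : qD k ≠ 0 := qD_ne_zero k
  have h2 : qG ((k:ℤ)+1) ≠ 0 := qG_ne_zero (by omega)
  field_simp
  rw [hg]
  have hM1k : M - 1 - (k:ℤ) = M - ((k:ℤ)+1) := by ring
  rw [hM1k]
  ring

lemma pascalB (M : ℤ) (k : ℕ) :
    qQ M (k+1) = v ^ ((k:ℤ)+1) * qQ (M-1) (k+1) + v ^ (-(M-(k+1))) * qQ (M-1) k := by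
  have hg : qG M = v ^ (-(M - ((k:ℤ)+1))) * qG ((k:ℤ)+1) + v ^ ((k:ℤ)+1) * qG (M - ((k:ℤ)+1)) := by
    have := qG_add' (M - ((k:ℤ)+1)) ((k:ℤ)+1)
    rw [sub_add_cancel] at this
    exact this
  rw [qQ, qQ, qQ, qN_succ_first, qN_succ_last, qD_succ]
  have h1 : qD k ≠ 0 := qD_ne_zero k
  have h2 : qG ((k:ℤ)+1) ≠ 0 := qG_ne_zero (by omega)
  field_simp
  rw [hg]
  have hM1k : M - 1 - (k:ℤ) = M - ((k:ℤ)+1) := by ring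
  rw [hM1k]
  ring

lemma qQ_negation (M : ℤ) (k : ℕ) : qQ (-M) k = (-1)^k * qQ (M + k - 1) k := by
  rw [qQ, qQ, ← mul_div_assoc]
  congr 1
  rw [qN, qN]
  have h1 : ∀ h ∈ range k, qG (-M - (h:ℤ)) = (-1) * qG (M + h) := by
    intro h _
    have : -M - (h:ℤ) = -(M + h) := by ring
    rw [this, qG_neg]; ring
  rw [Finset.prod_congr rfl h1, Finset.prod_mul_distrib]
  congr 1
  · simp
  · rw [← Finset.prod_range_reflect]
    apply Finset.prod_congr rfl
    intro h hh
    rw [Finset.mem_range] at hh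
    congr 1
    have : ((k - 1 - h : ℕ) : ℤ) = (k:ℤ) - 1 - h := by omega
    rw [this]; ring

lemma qN_split (M : ℤ) {j k : ℕ} (hjk : j ≤ k) :
    qN M k = qN M j * qN (M - j) (k - j) := by
  rw [qN, qN, qN]
  rw [show k = j + (k - j) by omega, Finset.prod_range_add,
    show j + (k-j) - j = k - j by omega]
  congr 1
  apply Finset.prod_congr rfl
  intro h _
  congr 1
  push_cast
  ring

lemma qN_nat_mul_qD (j k : ℕ) (hjk : j ≤ k) : qN (k:ℤ) j * qD (k - j) = qD k := by
  rw [qN, qD, qD]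
  rw [show k = (k - j) + j by omega, Finset.prod_range_add]
  rw [show (k-j) + j - j = k - j by omega]
  rw [mul_comm]
  congr 1
  rw [← Finset.prod_range_reflect]
  apply Finset.prod_congr rfl
  intro h hh
  rw [Finset.mem_range] at hh
  congr 1
  have : ((j - 1 - h : ℕ) : ℤ) = (j:ℤ) - 1 - h := by omega
  rw [this]
  push_cast
  omega

lemma qQ_trinomial (M : ℤ) {j k : ℕ} (hjk : j ≤ k) :
    qQ M k * qQ (k:ℤ) j = qQ M j * qQ (M - j) (k - j) := by
  rw [qQ, qQ, qQ, qQ]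
  rw [div_mul_div_comm, div_mul_div_comm]
  rw [qN_split M hjk]
  rw [div_eq_div_iff (by exact mul_ne_zero (qD_ne_zero _) (qD_ne_zero _))
    (by exact mul_ne_zero (qD_ne_zero _) (qD_ne_zero _))]
  have := qN_nat_mul_qD j k hjk
  calc qN M j * qN (M - ↑j) (k - j) * qN (↑k) j * (qD j * qD (k - j))
      = qN M j * qN (M - ↑j) (k - j) * (qN (↑k) j * qD (k - j)) * qD j := by ring
    _ = qN M j * qN (M - ↑j) (k - j) * qD k * qD j := by rw [this]
    _ = qN M j * qN (M - ↑j) (k - j) * (qD k * qD j) := by ring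

lemma vhelper2 {e f1 f2 g1 g2 : ℤ} (h1 : e + f1 = g1) (h2 : e + f2 = g2) (A B Z : RatFunc ℚ) :
    v ^ e * (v ^ f1 * A + v ^ f2 * B) * Z = v ^ g1 * A * Z + v ^ g2 * B * Z := by
  rw [← h1, ← h2, zpow_add₀ v_ne, zpow_add₀ v_ne]; ring

lemma vhelper2' {e f1 f2 g1 g2 : ℤ} (h1 : e + f1 = g1) (h2 : e + f2 = g2) (A Z1 Z2 : RatFunc ℚ) :
    v ^ e * A * (v ^ f1 * Z1 + v ^ f2 * Z2) = v ^ g1 * A * Z1 + v ^ g2 * A * Z2 := by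
  rw [← h1, ← h2, zpow_add₀ v_ne, zpow_add₀ v_ne]; ring

lemma shift (m n : ℤ) (k : ℕ) :
    ∑ j ∈ range (k+1), v ^ ((j:ℤ)*n - ((k:ℤ)-j)*m) * qQ m j * qQ n (k-j)
      = ∑ j ∈ range (k+1), v ^ ((j:ℤ)*(n-1) - ((k:ℤ)-j)*(m+1)) * qQ (m+1) j * qQ (n-1) (k-j) := by
  set X1 : ℕ → RatFunc ℚ :=
    fun j => v ^ ((j:ℤ)*n - ((k:ℤ)-j)*(m+1)) * qQ m j * qQ (n-1) (k-j) with hX1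
  set X2 : ℕ → RatFunc ℚ :=
    fun j => v ^ (((j:ℤ)+1)*n - ((k:ℤ)-j)*(m+1)) * qQ m j * qQ (n-1) (k-j-1) with hX2
  have lhs_eq : ∑ j ∈ range (k+1), v ^ ((j:ℤ)*n - ((k:ℤ)-j)*m) * qQ m j * qQ n (k-j)
      = (∑ j ∈ range (k+1), X1 j) + ∑ j ∈ range k, X2 j := by
    rw [Finset.sum_range_succ, Finset.sum_range_succ X1]
    have key : ∀ j ∈ range k,
        v ^ ((j:ℤ)*n - ((k:ℤ)-j)*m) * qQ m j * qQ n (k-j) = X1 j + X2 j := by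
      intro j hj
      rw [Finset.mem_range] at hj
      obtain ⟨t, ht⟩ : ∃ t, k - j = t + 1 := ⟨k - j - 1, by omega⟩
      have htz : (t:ℤ) + 1 = (k:ℤ) - j := by omega
      rw [hX1, hX2]
      simp only
      rw [ht]
      simp only [Nat.add_sub_cancel]
      rw [pascalA n t]
      exact vhelper2' (by rw [← htz]; ring) (by rw [← htz]; ring) _ _ _
    rw [Finset.sum_congr rfl key, Finset.sum_add_distrib]
    have hk : v ^ ((k:ℤ)*n - ((k:ℤ)-k)*m) * qQ m k * qQ n (k-k) = X1 k := by
      rw [hX1]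
      simp [qQ_zero, sub_self]
    rw [hk]; ring
  have rhs_eq : ∑ j ∈ range (k+1), v ^ ((j:ℤ)*(n-1) - ((k:ℤ)-j)*(m+1)) * qQ (m+1) j * qQ (n-1) (k-j)
      = (∑ j ∈ range (k+1), X1 j) + ∑ j ∈ range k, X2 j := by
    rw [Finset.sum_range_succ', Finset.sum_range_succ' X1]
    have key : ∀ j ∈ range k,
        v ^ (((j+1:ℕ):ℤ)*(n-1) - ((k:ℤ)-((j+1:ℕ):ℤ))*(m+1)) * qQ (m+1) (j+1) * qQ (n-1) (k-(j+1))
          = X1 (j+1) + X2 j := by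
      intro j hj
      rw [Finset.mem_range] at hj
      rw [hX1, hX2]
      simp only
      have hb := pascalB (m+1) j
      rw [show (m:ℤ)+1-1 = m by ring] at hb
      rw [hb, show k - j - 1 = k - (j+1) by omega]
      exact vhelper2 (by push_cast; ring) (by push_cast; ring) _ _ _
    rw [Finset.sum_congr rfl key, Finset.sum_add_distrib]
    have h0 : v ^ (((0:ℕ):ℤ)*(n-1) - ((k:ℤ)-((0:ℕ):ℤ))*(m+1)) * qQ (m+1) 0 * qQ (n-1) (k-0)
        = X1 0 := by
      rw [hX1]
      simp [qQ_zero]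
    rw [h0]; ring
  rw [lhs_eq, rhs_eq]

lemma vand_base (m : ℤ) (k : ℕ) :
    ∑ j ∈ range (k+1), v ^ ((j:ℤ)*(0:ℤ) - ((k:ℤ)-j)*m) * qQ m j * qQ (0:ℤ) (k-j) = qQ m k := by
  rw [Finset.sum_eq_single_of_mem k (Finset.self_mem_range_succ k)]
  · simp [qQ_zero, sub_self]
  · intro j hj hne
    rw [Finset.mem_range] at hj
    have hjk : j < k := by omega
    have : qQ (0:ℤ) (k-j) = 0 := by
      have := qQ_nat_eq_zero (t := 0) (k := k - j) (by omega)
      simpa using this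
    rw [this, mul_zero]

lemma vand_nat (k : ℕ) : ∀ (t : ℕ) (m : ℤ),
    ∑ j ∈ range (k+1), v ^ ((j:ℤ)*(t:ℤ) - ((k:ℤ)-j)*m) * qQ m j * qQ (t:ℤ) (k-j)
      = qQ (m+t) k := by
  intro t
  induction t with
  | zero => intro m; simpa using vand_base m k
  | succ t ih =>
    intro m
    have hs := shift m ((t:ℤ)+1) k
    rw [show ((t:ℤ)+1) - 1 = (t:ℤ) by ring] at hs
    push_cast
    rw [hs, ih (m+1)]
    congr 1
    ring

lemma vand_neg (k : ℕ) : ∀ (t : ℕ) (m : ℤ),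
    ∑ j ∈ range (k+1), v ^ ((j:ℤ)*(-(t:ℤ)) - ((k:ℤ)-j)*m) * qQ m j * qQ (-(t:ℤ)) (k-j)
      = qQ (m-t) k := by
  intro t
  induction t with
  | zero =>
    intro m
    have := vand_base m k
    simpa using this
  | succ t ih =>
    intro m
    have hs := shift (m-1) (-(t:ℤ)) k
    rw [show (m:ℤ)-1+1 = m by ring, show -(t:ℤ)-1 = -((t:ℤ)+1) by ring] at hs
    have hih := ih (m-1)
    rw [hs] at hih
    push_cast
    rw [hih]
    congr 1
    ring

lemma vandermonde (m n : ℤ) (k : ℕ) :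
    ∑ j ∈ range (k+1), v ^ ((j:ℤ)*n - ((k:ℤ)-j)*m) * qQ m j * qQ n (k-j) = qQ (m+n) k := by
  rcases Int.eq_nat_or_neg n with ⟨t, rfl | rfl⟩
  · exact vand_nat k t m
  · have := vand_neg k t m
    rw [this, sub_eq_add_neg]


theorem qbinom_triple_sum_identity (a c u r : ℕ) (hac : c ≤ a) (b : ℤ) :
    ∑ f ∈ Finset.range (u + 1),
        (-1 : RatFunc ℚ) ^ f * qbinom ((a : ℤ) - c + f - 1) f * qbinom (b + r - f) r *
          qbinom ((a : ℤ) + u) ((u : ℤ) - f) * v ^ ((f : ℤ) * ((u : ℤ) + c - r)) =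
      ∑ δ ∈ Finset.range (min u r + 1),
        v ^ ((δ : ℤ) * b + ((u : ℤ) - δ) * ((c : ℤ) - a - r)) *
          qbinom (b + r - u) ((r : ℤ) - δ) * qbinom ((c : ℤ) + u - δ) ((u : ℤ) - δ) *
          qbinom ((a : ℤ) + u) δ := by
  set T : ℕ → ℕ → RatFunc ℚ := fun f δ =>
    qQ ((c:ℤ)-a) f *
      (v ^ ((δ:ℤ)*(b+(r:ℤ)-u) - ((r:ℤ)-δ)*(((u-f : ℕ)):ℤ)) * qQ (((u-f : ℕ)):ℤ) δ *
        qQ (b+(r:ℤ)-u) (r-δ)) *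
      qQ ((a:ℤ)+u) (u-f) * v ^ ((f:ℤ)*((u:ℤ)+c-r)) with hT
  have stepA : ∑ f ∈ Finset.range (u + 1),
        (-1 : RatFunc ℚ) ^ f * qbinom ((a : ℤ) - c + f - 1) f * qbinom (b + r - f) r *
          qbinom ((a : ℤ) + u) ((u : ℤ) - f) * v ^ ((f : ℤ) * ((u : ℤ) + c - r))
      = ∑ f ∈ Finset.range (u+1), ∑ δ ∈ Finset.range (r+1), T f δ := by
    apply Finset.sum_congr rfl
    intro f hf
    rw [Finset.mem_range] at hf
    have hfu : f ≤ u := by omega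
    have hcast : ((u - f : ℕ) : ℤ) = (u:ℤ) - f := by omega
    have hneg : (-1 : RatFunc ℚ)^f * qQ ((a:ℤ) - c + f - 1) f = qQ ((c:ℤ) - a) f := by
      have h1 := qQ_negation ((a:ℤ) - c) f
      rw [show -((a:ℤ) - c) = (c:ℤ) - a by ring] at h1
      rw [h1]
    have hvdm := vandermonde (((u - f : ℕ)):ℤ) (b+(r:ℤ)-u) r
    rw [show (((u - f : ℕ)):ℤ) + (b+(r:ℤ)-u) = b + (r:ℤ) - f by rw [hcast]; ring] at hvdm
    rw [qbinom_eq, ← hcast, qbinom_eq, qbinom_eq, hneg, ← hvdm]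
    rw [Finset.mul_sum, Finset.sum_mul, Finset.sum_mul]
  rw [stepA, Finset.sum_comm]
  have hsub : Finset.range (min u r + 1) ⊆ Finset.range (r + 1) := by
    apply Finset.range_subset_range.2; omega
  rw [← Finset.sum_subset hsub]
  · apply Finset.sum_congr rfl
    intro δ hδ
    rw [Finset.mem_range] at hδ
    have hδu : δ ≤ u := by omega
    have hδr : δ ≤ r := by omega
    have hcastδ : ((u - δ : ℕ) : ℤ) = (u:ℤ) - δ := by omega
    set C0 : RatFunc ℚ := v ^ ((δ:ℤ)*b + ((u:ℤ)-δ)*((c:ℤ)-a-r)) *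
      qQ (b+(r:ℤ)-u) (r-δ) * qQ ((a:ℤ)+u) δ with hC0
    have hsubf : Finset.range (u - δ + 1) ⊆ Finset.range (u + 1) := by
      apply Finset.range_subset_range.2; omega
    have hzero : ∀ f ∈ Finset.range (u+1), f ∉ Finset.range (u - δ + 1) → T f δ = 0 := by
      intro f hf1 hf2
      rw [Finset.mem_range] at hf1 hf2
      push_neg at hf2
      rw [hT]
      simp only
      rw [show qQ (((u - f : ℕ)):ℤ) δ = 0 from qQ_nat_eq_zero (by omega)]
      ring
    rw [← Finset.sum_subset hsubf hzero]
    have key : ∀ f ∈ Finset.range (u - δ + 1), T f δ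
        = C0 * (v ^ ((f:ℤ)*((a:ℤ)+u-δ) - ((((u-δ : ℕ)):ℤ)-f)*((c:ℤ)-a)) *
            qQ ((c:ℤ)-a) f * qQ ((a:ℤ)+u-δ) ((u-δ)-f)) := by
      intro f hf
      rw [Finset.mem_range] at hf
      have hfuδ : f ≤ u - δ := by omega
      have hfu : f ≤ u := by omega
      have hcastf : ((u - f : ℕ) : ℤ) = (u:ℤ) - f := by omega
      have htri := qQ_trinomial ((a:ℤ)+u) (j := δ) (k := u - f) (by omega)
      rw [show u - f - δ = u - δ - f by omega] at htri
      have hexp : v ^ ((δ:ℤ)*(b+(r:ℤ)-u) - ((r:ℤ)-δ)*(((u-f : ℕ)):ℤ)) *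
            v ^ ((f:ℤ)*((u:ℤ)+c-r))
          = v ^ ((δ:ℤ)*b + ((u:ℤ)-δ)*((c:ℤ)-a-r)) *
            v ^ ((f:ℤ)*((a:ℤ)+u-δ) - ((((u-δ : ℕ)):ℤ)-f)*((c:ℤ)-a)) := by
        rw [← zpow_add₀ v_ne, ← zpow_add₀ v_ne]
        congr 1
        rw [hcastf, hcastδ]
        ring
      rw [hT, hC0]
      simp only
      calc qQ ((c:ℤ)-a) f *
            (v ^ ((δ:ℤ)*(b+(r:ℤ)-u) - ((r:ℤ)-δ)*(((u-f : ℕ)):ℤ)) * qQ (((u-f : ℕ)):ℤ) δ *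
              qQ (b+(r:ℤ)-u) (r-δ)) *
            qQ ((a:ℤ)+u) (u-f) * v ^ ((f:ℤ)*((u:ℤ)+c-r))
          = (qQ ((a:ℤ)+u) (u-f) * qQ (((u-f : ℕ)):ℤ) δ) *
            (v ^ ((δ:ℤ)*(b+(r:ℤ)-u) - ((r:ℤ)-δ)*(((u-f : ℕ)):ℤ)) * v ^ ((f:ℤ)*((u:ℤ)+c-r))) *
            qQ ((c:ℤ)-a) f * qQ (b+(r:ℤ)-u) (r-δ) := by ring
        _ = (qQ ((a:ℤ)+u) δ * qQ ((a:ℤ)+u-δ) (u-δ-f)) *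
            (v ^ ((δ:ℤ)*b + ((u:ℤ)-δ)*((c:ℤ)-a-r)) *
              v ^ ((f:ℤ)*((a:ℤ)+u-δ) - ((((u-δ : ℕ)):ℤ)-f)*((c:ℤ)-a))) *
            qQ ((c:ℤ)-a) f * qQ (b+(r:ℤ)-u) (r-δ) := by rw [htri, hexp]
        _ = _ := by ring
    rw [Finset.sum_congr rfl key, ← Finset.mul_sum]
    have hvdm2 := vandermonde ((c:ℤ)-a) ((a:ℤ)+u-δ) (u-δ)
    rw [show ((c:ℤ)-a) + ((a:ℤ)+u-δ) = (c:ℤ)+u-δ by ring] at hvdm2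
    rw [hvdm2]
    rw [show ((r:ℤ) - δ) = ((r-δ : ℕ) : ℤ) by omega, qbinom_eq,
      show ((u:ℤ) - δ) = ((u-δ : ℕ) : ℤ) by omega, qbinom_eq, qbinom_eq]
    rw [hC0, hcastδ]
    ring
  · intro δ hδ1 hδ2
    rw [Finset.mem_range] at hδ1 hδ2
    push_neg at hδ2
    have huδ : u < δ := by omega
    apply Finset.sum_eq_zero
    intro f hf
    rw [hT]
    simp only
    rw [show qQ (((u - f : ℕ)):ℤ) δ = 0 from qQ_nat_eq_zero (by omega)]
    ring
end

section
/- Let p, d, r, q, t be nonnegative integers. Then the integer quantity A = -p^2 + pd - r^2 + d(r-d) + q(-q + p - r - d) + t(q - t + r - p) satisfies A \leq 0, and A = 0 if and only if p = d = r = q = t = 0. -/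
theorem degree_estimate_A (p d r q t : ℤ) (hp : 0 ≤ p) (hd : 0 ≤ d) (hr : 0 ≤ r)
    (hq : 0 ≤ q) (ht : 0 ≤ t) :
    (-p ^ 2 + p * d - r ^ 2 + d * (r - d) + q * (-q + p - r - d) + t * (q - t + r - p) ≤ 0) ∧
      (-p ^ 2 + p * d - r ^ 2 + d * (r - d) + q * (-q + p - r - d) + t * (q - t + r - p) = 0 ↔
        p = 0 ∧ d = 0 ∧ r = 0 ∧ q = 0 ∧ t = 0) := by
  have s1 := sq_nonneg (2*p - d - q + t)
  have s2 := sq_nonneg (3*d - 2*r + q + t)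
  have s3 := sq_nonneg (2*r + 2*q - t)
  have s4 := sq_nonneg t
  constructor
  · nlinarith [s1, s2, s3, s4]
  · constructor
    · intro hA
      have key : 6*(2*p - d - q + t)^2 + 2*(3*d - 2*r + q + t)^2 + 4*(2*r + 2*q - t)^2
          + 12*t^2 = 0 := by linear_combination (-24 : ℤ) * hA
      have e4 : t^2 = 0 := by linarith
      have ht0 : t = 0 := by
        have := pow_eq_zero_iff (n := 2) (by norm_num) |>.mp e4
        exact this
      have e3 : (2*r + 2*q - t)^2 = 0 := by linarith
      have e3' : 2*r + 2*q - t = 0 := pow_eq_zero_iff (n := 2) (by norm_num) |>.mp e3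
      have hr0 : r = 0 := by omega
      have hq0 : q = 0 := by omega
      have e2 : (3*d - 2*r + q + t)^2 = 0 := by linarith
      have e2' : 3*d - 2*r + q + t = 0 := pow_eq_zero_iff (n := 2) (by norm_num) |>.mp e2
      have hd0 : d = 0 := by omega
      have e1 : (2*p - d - q + t)^2 = 0 := by linarith
      have e1' : 2*p - d - q + t = 0 := pow_eq_zero_iff (n := 2) (by norm_num) |>.mp e1
      have hp0 : p = 0 := by omega
      exact ⟨hp0, hd0, hr0, hq0, ht0⟩
    · rintro ⟨rfl, rfl, rfl, rfl, rfl⟩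
      ring
end
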